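/- arXiv:1909.05627 — 2 statements merged into one kernel-verified Lean document; each statement's English description precedes it below -/
import Mathlib

section
/- Let G : ℝ × ℝ → ℝ be differentiable in its second argument, let F be the deformation gradient of the anti-plane shear deformation x(t,X) = (X₁, X₂, X₃ + G(t,R)), R = √(X₁²+X₂²), and let C = FᵀF. Let A₁, A₂ be the helical fiber direction fields with pitch angle β. Then at every point with R > 0, the invariants take the values I₁ = I₂ = 3 + G_R², I₃ = det C = 1, I₄ = I₆ = 1, I₅ = I₇ = 1 + G_R² sin²β, and I₈ = cos²(2β), where G_R = ∂G/∂R(t,R). -/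
noncomputable section

open Real Matrix

/-- Cylindrical radius `R = √(X₁² + X₂²)` of a material point `X`. -/
def rad (X : Fin 3 → ℝ) : ℝ := Real.sqrt (X 0 ^ 2 + X 1 ^ 2)

/-- The anti-plane shear deformation `x(t,X) = (X₁, X₂, X₃ + G(t,R))`. -/
def defm (G : ℝ → ℝ → ℝ) (t : ℝ) (X : Fin 3 → ℝ) : Fin 3 → ℝ :=
  ![X 0, X 1, X 2 + G t (rad X)]

/-- Partial derivative of a scalar field on `ℝ³` with respect to the `j`-th coordinate. -/
def pd (f : (Fin 3 → ℝ) → ℝ) (j : Fin 3) (X : Fin 3 → ℝ) : ℝ :=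
  deriv (fun s => f (Function.update X j s)) (X j)

/-- Deformation gradient `F_{ij} = ∂x_i/∂X_j` of the anti-plane shear deformation. -/
def defGrad (G : ℝ → ℝ → ℝ) (t : ℝ) (X : Fin 3 → ℝ) : Matrix (Fin 3) (Fin 3) ℝ :=
  Matrix.of fun i j => pd (fun Y => defm G t Y i) j X

/-- Right Cauchy–Green tensor `C = FᵀF`. -/
def CG (G : ℝ → ℝ → ℝ) (t : ℝ) (X : Fin 3 → ℝ) : Matrix (Fin 3) (Fin 3) ℝ :=
  (defGrad G t X)ᵀ * defGrad G t X

/-- Symmetrization `(M + Mᵀ)/2` of a matrix. -/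
def symM (M : Matrix (Fin 3) (Fin 3) ℝ) : Matrix (Fin 3) (Fin 3) ℝ :=
  (1 / 2 : ℝ) • (M + Mᵀ)

/-- First helical fiber field `A₁ = (−cosβ sinΦ, cosβ cosΦ, sinβ)`. -/
def fib1 (β : ℝ) (X : Fin 3 → ℝ) : Fin 3 → ℝ :=
  ![-(Real.cos β) * (X 1 / rad X), Real.cos β * (X 0 / rad X), Real.sin β]

/-- Second helical fiber field `A₂ = (−cosβ sinΦ, cosβ cosΦ, −sinβ)`. -/
def fib2 (β : ℝ) (X : Fin 3 → ℝ) : Fin 3 → ℝ :=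
  ![-(Real.cos β) * (X 1 / rad X), Real.cos β * (X 0 / rad X), -(Real.sin β)]

/-- Invariant `I₁ = tr C`. -/
def inv1 (M : Matrix (Fin 3) (Fin 3) ℝ) : ℝ := M.trace

/-- Invariant `I₂ = ½((tr C)² − tr(C²))`. -/
def inv2 (M : Matrix (Fin 3) (Fin 3) ℝ) : ℝ := (M.trace ^ 2 - (M * M).trace) / 2

/-- Invariant `I₄ = AᵀCA` (and `I₆` for the second fiber). -/
def inv4 (A : Fin 3 → ℝ) (M : Matrix (Fin 3) (Fin 3) ℝ) : ℝ := A ⬝ᵥ (M *ᵥ A)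

/-- Invariant `I₅ = AᵀC²A` (and `I₇` for the second fiber). -/
def inv5 (A : Fin 3 → ℝ) (M : Matrix (Fin 3) (Fin 3) ℝ) : ℝ := A ⬝ᵥ ((M * M) *ᵥ A)

/-- Invariant `I₈ = (A₁ᵀA₂)(A₁ᵀCA₂)`. -/
def inv8 (A₁ A₂ : Fin 3 → ℝ) (M : Matrix (Fin 3) (Fin 3) ℝ) : ℝ :=
  (A₁ ⬝ᵥ A₂) * (A₁ ⬝ᵥ (M *ᵥ A₂))

/-- Matrix of partial derivatives of a scalar function of a matrix with respect to the
matrix entries, evaluated at `C`. -/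
def matPD (f : Matrix (Fin 3) (Fin 3) ℝ → ℝ) (C : Matrix (Fin 3) (Fin 3) ℝ) :
    Matrix (Fin 3) (Fin 3) ℝ :=
  Matrix.of fun i j => deriv (fun s : ℝ => f (C + s • Matrix.single i j 1)) 0

/-- Partial derivative in the first (time) variable. -/
def dt (G : ℝ → ℝ → ℝ) : ℝ → ℝ → ℝ := fun t R => deriv (fun τ => G τ R) t

/-- Partial derivative in the second (radial) variable. -/
def dR (G : ℝ → ℝ → ℝ) : ℝ → ℝ → ℝ := fun t R => deriv (fun r => G t r) R

/-!
The deformation gradient is `F = I + G_R e₃ ⊗ N`, with `N = (cos Φ, sin Φ, 0)` the radial unit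
vector, so `det F = 1` and `C = I + G_R (N ⊗ e₃ + e₃ ⊗ N) + G_R² N ⊗ N`. The fibers are
`A = cos β T ± sin β e₃` with `T = (-sin Φ, cos Φ, 0)` orthogonal to `N` and `e₃`, hence
`C A = A ± G_R sin β N`, from which `I₄, …, I₈` follow. Once `F` is computed, everything is a
polynomial identity modulo `cos² Φ + sin² Φ = 1` and `cos² β + sin² β = 1`.
-/

-- `I + g e₃ ⊗ (a, b, 0)`
def shearGrad (g a b : ℝ) : Matrix (Fin 3) (Fin 3) ℝ :=
  !![1, 0, 0; 0, 1, 0; g * a, g * b, 1]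

def shearCG (g a b : ℝ) : Matrix (Fin 3) (Fin 3) ℝ := (shearGrad g a b)ᵀ * shearGrad g a b

def helicalFiber (c s a b : ℝ) : Fin 3 → ℝ := ![-c * b, c * a, s]

theorem shearCG_eq (g a b : ℝ) : shearCG g a b =
    !![1 + g ^ 2 * a ^ 2, g ^ 2 * a * b, g * a;
       g ^ 2 * a * b, 1 + g ^ 2 * b ^ 2, g * b;
       g * a, g * b, 1] := by
  ext i j
  fin_cases i <;> fin_cases j <;> simp [shearCG, shearGrad, mul_apply, Fin.sum_univ_three] <;> ring

theorem det_shearCG (g a b : ℝ) : (shearCG g a b).det = 1 := by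
  simp [shearCG, shearGrad, det_fin_three]

theorem transpose_shearCG (g a b : ℝ) : (shearCG g a b)ᵀ = shearCG g a b := by
  rw [shearCG, transpose_mul, transpose_transpose]

-- `A + g s (a, b, 0)`
theorem shearCG_mulVec_helicalFiber (g a b c s : ℝ) :
    shearCG g a b *ᵥ helicalFiber c s a b = ![-c * b + g * s * a, c * a + g * s * b, s] := by
  ext i
  fin_cases i <;> simp [shearCG_eq, helicalFiber, mulVec] <;> ring

section shear

variable {g a b : ℝ} (hab : a ^ 2 + b ^ 2 = 1)
include hab

theorem inv1_shearCG : inv1 (shearCG g a b) = 3 + g ^ 2 := by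
  simp only [inv1, shearCG_eq, trace_fin_three_of]
  linear_combination g ^ 2 * hab

theorem inv2_shearCG : inv2 (shearCG g a b) = 3 + g ^ 2 := by
  simp only [inv2, shearCG_eq, mul_fin_three, trace_fin_three_of]
  linear_combination g ^ 2 * hab

theorem inv4_helicalFiber_shearCG (c s : ℝ) :
    inv4 (helicalFiber c s a b) (shearCG g a b) = c ^ 2 + s ^ 2 := by
  rw [inv4, shearCG_mulVec_helicalFiber, helicalFiber, vec3_dotProduct']
  linear_combination c ^ 2 * hab

theorem inv5_helicalFiber_shearCG (c s : ℝ) :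
    inv5 (helicalFiber c s a b) (shearCG g a b) = c ^ 2 + s ^ 2 + g ^ 2 * s ^ 2 := by
  rw [inv5, ← mulVec_mulVec, dotProduct_mulVec, ← mulVec_transpose, transpose_shearCG,
    shearCG_mulVec_helicalFiber, vec3_dotProduct']
  linear_combination (c ^ 2 + g ^ 2 * s ^ 2) * hab

theorem inv8_helicalFiber_shearCG (c s : ℝ) :
    inv8 (helicalFiber c s a b) (helicalFiber c (-s) a b) (shearCG g a b) =
      (c ^ 2 - s ^ 2) ^ 2 := by
  rw [inv8, shearCG_mulVec_helicalFiber, helicalFiber, helicalFiber, vec3_dotProduct',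
    vec3_dotProduct']
  linear_combination (c ^ 2 * (c ^ 2 * a ^ 2 + c ^ 2 * b ^ 2 + c ^ 2 - 2 * s ^ 2)) * hab

end shear

theorem hasDerivAt_update_apply {𝕜 ι : Type*} [NontriviallyNormedField 𝕜] [Fintype ι]
    [DecidableEq ι] (X : ι → 𝕜) (i j : ι) :
    HasDerivAt (fun s => Function.update X j s i) ((Pi.single j 1 : ι → 𝕜) i) (X j) :=
  hasDerivAt_pi.mp (hasDerivAt_update X j (X j)) i

theorem hasDerivAt_rad_update {X : Fin 3 → ℝ} (hX : 0 < rad X) (j : Fin 3) :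
    HasDerivAt (fun s => rad (Function.update X j s))
      ((X 0 * (Pi.single j 1 : Fin 3 → ℝ) 0 + X 1 * (Pi.single j 1 : Fin 3 → ℝ) 1) / rad X)
      (X j) := by
  have hsq := ((hasDerivAt_update_apply X 0 j).fun_pow 2).fun_add
    ((hasDerivAt_update_apply X 1 j).fun_pow 2)
  have hpos : 0 < X 0 ^ 2 + X 1 ^ 2 := Real.sqrt_pos.mp hX
  have h := hsq.sqrt (by simpa using hpos.ne')
  simp only [Function.update_eq_self] at h
  refine h.congr_deriv ?_
  rw [show rad X = √(X 0 ^ 2 + X 1 ^ 2) from rfl]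
  field_simp
  push_cast
  ring

theorem div_rad_sq_add_div_rad_sq {X : Fin 3 → ℝ} (hX : 0 < rad X) :
    (X 0 / rad X) ^ 2 + (X 1 / rad X) ^ 2 = 1 := by
  rw [div_pow, div_pow, ← add_div, rad, Real.sq_sqrt (by positivity), div_self]
  exact (Real.sqrt_pos.mp hX).ne'

theorem defGrad_apply_of_ne_two (G : ℝ → ℝ → ℝ) (t : ℝ) (X : Fin 3 → ℝ) {i : Fin 3}
    (hi : i ≠ 2) (j : Fin 3) : defGrad G t X i j = (Pi.single j 1 : Fin 3 → ℝ) i := by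
  have hcoord : ∀ Y, defm G t Y i = Y i := by
    fin_cases i
    · exact fun _ => rfl
    · exact fun _ => rfl
    · exact absurd rfl hi
  simp only [defGrad, of_apply, pd, hcoord]
  exact (hasDerivAt_update_apply X i j).deriv

theorem defGrad_two_apply {G : ℝ → ℝ → ℝ} {t : ℝ} {X : Fin 3 → ℝ}
    (hG : DifferentiableAt ℝ (G t) (rad X)) (hX : 0 < rad X) (j : Fin 3) :
    defGrad G t X 2 j = (Pi.single j 1 : Fin 3 → ℝ) 2 +
      dR G t (rad X) *
        ((X 0 * (Pi.single j 1 : Fin 3 → ℝ) 0 + X 1 * (Pi.single j 1 : Fin 3 → ℝ) 1) / rad X) :=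
  ((hasDerivAt_update_apply X 2 j).add
    (hG.hasDerivAt.comp_of_eq (X j) (hasDerivAt_rad_update hX j) (by simp))).deriv

theorem defGrad_eq_shearGrad {G : ℝ → ℝ → ℝ} {t : ℝ} {X : Fin 3 → ℝ}
    (hG : DifferentiableAt ℝ (G t) (rad X)) (hX : 0 < rad X) :
    defGrad G t X = shearGrad (dR G t (rad X)) (X 0 / rad X) (X 1 / rad X) := by
  ext i j
  fin_cases i <;> fin_cases j <;>
    simp [defGrad_apply_of_ne_two, defGrad_two_apply hG hX, shearGrad]

theorem CG_eq_shearCG {G : ℝ → ℝ → ℝ} {t : ℝ} {X : Fin 3 → ℝ}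
    (hG : DifferentiableAt ℝ (G t) (rad X)) (hX : 0 < rad X) :
    CG G t X = shearCG (dR G t (rad X)) (X 0 / rad X) (X 1 / rad X) := by
  rw [CG, defGrad_eq_shearGrad hG hX, shearCG]

/-- For `G(t,R)` differentiable in its second argument, at every point with
`R > 0` the invariants of the anti-plane shear deformation with helical fibers of pitch `β`
take the values `I₁ = I₂ = 3 + G_R²`, `I₃ = det C = 1`, `I₄ = I₆ = 1`,
`I₅ = I₇ = 1 + G_R² sin²β`, `I₈ = cos²(2β)`. -/
theorem antiPlaneShear_invariants
    (G : ℝ → ℝ → ℝ) (hG : ∀ t, Differentiable ℝ (G t)) (β : ℝ) :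
    ∀ t : ℝ, ∀ X : Fin 3 → ℝ, rad X > 0 →
      inv1 (CG G t X) = 3 + (dR G t (rad X)) ^ 2 ∧
      inv2 (CG G t X) = 3 + (dR G t (rad X)) ^ 2 ∧
      (CG G t X).det = 1 ∧
      inv4 (fib1 β X) (CG G t X) = 1 ∧
      inv4 (fib2 β X) (CG G t X) = 1 ∧
      inv5 (fib1 β X) (CG G t X) = 1 + (dR G t (rad X)) ^ 2 * Real.sin β ^ 2 ∧
      inv5 (fib2 β X) (CG G t X) = 1 + (dR G t (rad X)) ^ 2 * Real.sin β ^ 2 ∧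
      inv8 (fib1 β X) (fib2 β X) (CG G t X) = Real.cos (2 * β) ^ 2 := by
  intro t X hX
  have hab := div_rad_sq_add_div_rad_sq hX
  have hfib1 : fib1 β X = helicalFiber (cos β) (sin β) (X 0 / rad X) (X 1 / rad X) := rfl
  have hfib2 : fib2 β X = helicalFiber (cos β) (-sin β) (X 0 / rad X) (X 1 / rad X) := rfl
  have hcs : cos β ^ 2 + sin β ^ 2 = 1 := cos_sq_add_sin_sq β
  rw [CG_eq_shearCG (hG t).differentiableAt hX, hfib1, hfib2,
    inv4_helicalFiber_shearCG hab, inv4_helicalFiber_shearCG hab,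
    inv5_helicalFiber_shearCG hab, inv5_helicalFiber_shearCG hab,
    inv8_helicalFiber_shearCG hab, hcs, neg_sq, hcs, cos_two_mul']
  exact ⟨inv1_shearCG hab, inv2_shearCG hab, det_shearCG _ _ _, rfl, rfl, rfl, rfl, rfl⟩
end
end

section
/- (Theorem 3.2) Let a, b, q₁, q₂, K₃, K₄ be real constants, β ∈ (0,π/2), ρ₀ > 0, G : ℝ × ℝ → ℝ twice continuously differentiable, and p = p(t,R) any smooth function of t and R only. Consider the anti-plane shear deformation x(t,X) = (X₁, X₂, X₃ + G(t,R)), the helical fibers A₁, A₂ with pitch β, the Mooney–Rivlin/quadratic-reinforcement stored energy W = a(I₁ − 3) + b(I₂ − 3) + q₁(I₄ − 1)² + q₂(I₆ − 1)² + K₃ I₈² + K₄ I₈, and the stress P = F S, S = −p C⁻¹ + 2ρ₀ ∂Ŵ/∂C. Then the third (Z-) component of the momentum equations, ρ₀ ∂²x₃/∂t² = Σ_j ∂P_{3j}/∂X_j, holds at all points with R > 0 if and only if G satisfies the linear cylindrical wave equation G_tt = α ( G_RR + G_R/R ) with α = 2(a + b); in particular, this equation involves neither q₁, q₂, K₃,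 K₄ nor the pitch angle β. -/
noncomputable section

open Real Matrix

/-- First Piola–Kirchhoff stress `P = F S`, `S = −p C⁻¹ + 2ρ₀ ∂Ŵ/∂C`, for a stored energy
`Ŵ` depending on the material point `X` (through the fiber fields) and a matrix argument. -/
def PK1 (W : (Fin 3 → ℝ) → Matrix (Fin 3) (Fin 3) ℝ → ℝ) (p : ℝ → ℝ → ℝ) (ρ₀ : ℝ)
    (G : ℝ → ℝ → ℝ) (t : ℝ) (X : Fin 3 → ℝ) : Matrix (Fin 3) (Fin 3) ℝ :=
  defGrad G t X *
    (-(p t (rad X)) • (CG G t X)⁻¹ + (2 * ρ₀) • matPD (W X) (CG G t X))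
/-- The Mooney–Rivlin / quadratic-reinforcement stored energy
`W = a(I₁−3) + b(I₂−3) + q₁(I₄−1)² + q₂(I₆−1)² + K₃I₈² + K₄I₈`, evaluated (as `Ŵ`) at the
invariants of the symmetrized matrix in place of `C`. -/
def storedWMR (a b q₁ q₂ K₃ K₄ β : ℝ) (X : Fin 3 → ℝ)
    (M : Matrix (Fin 3) (Fin 3) ℝ) : ℝ :=
  a * (inv1 (symM M) - 3) + b * (inv2 (symM M) - 3)
    + q₁ * (inv4 (fib1 β X) (symM M) - 1) ^ 2
    + q₂ * (inv4 (fib2 β X) (symM M) - 1) ^ 2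
    + K₃ * (inv8 (fib1 β X) (fib2 β X) (symM M)) ^ 2
    + K₄ * inv8 (fib1 β X) (fib2 β X) (symM M)

/-! ### Auxiliary lemmas -/

lemma rad_sq (X : Fin 3 → ℝ) : rad X ^ 2 = X 0 ^ 2 + X 1 ^ 2 := by
  rw [rad, Real.sq_sqrt]; positivity

lemma rad_update2 (X : Fin 3 → ℝ) (s : ℝ) : rad (Function.update X 2 s) = rad X := by
  simp [rad, Function.update]

lemma hasDerivAt_rad0 (X : Fin 3 → ℝ) (h : rad X > 0) :
    HasDerivAt (fun s => rad (Function.update X 0 s)) (X 0 / rad X) (X 0) := by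
  have h2 : X 0 ^ 2 + X 1 ^ 2 ≠ 0 := by
    intro hc; rw [rad, hc, Real.sqrt_zero] at h; exact lt_irrefl _ h
  have hs : HasDerivAt (fun s : ℝ => s ^ 2 + X 1 ^ 2) (2 * X 0) (X 0) := by
    simpa using (hasDerivAt_pow 2 (X 0)).add_const (X 1 ^ 2)
  have h3 := (Real.hasDerivAt_sqrt h2).comp (X 0) hs
  have he : (fun s => rad (Function.update X 0 s))
      = (fun x => √x) ∘ (fun s : ℝ => s ^ 2 + X 1 ^ 2) := by
    funext s; simp [rad, Function.update]
  rw [he]; refine h3.congr_deriv ?_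
  rw [show √(X 0 ^ 2 + X 1 ^ 2) = rad X from rfl]; field_simp

lemma hasDerivAt_rad1 (X : Fin 3 → ℝ) (h : rad X > 0) :
    HasDerivAt (fun s => rad (Function.update X 1 s)) (X 1 / rad X) (X 1) := by
  have h2 : X 0 ^ 2 + X 1 ^ 2 ≠ 0 := by
    intro hc; rw [rad, hc, Real.sqrt_zero] at h; exact lt_irrefl _ h
  have hs : HasDerivAt (fun s : ℝ => X 0 ^ 2 + s ^ 2) (2 * X 1) (X 1) := by
    simpa using ((hasDerivAt_pow 2 (X 1)).const_add (X 0 ^ 2))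
  have h3 := (Real.hasDerivAt_sqrt h2).comp (X 1) hs
  have he : (fun s => rad (Function.update X 1 s))
      = (fun x => √x) ∘ (fun s : ℝ => X 0 ^ 2 + s ^ 2) := by
    funext s; simp [rad, Function.update]
  rw [he]; refine h3.congr_deriv ?_
  rw [show √(X 0 ^ 2 + X 1 ^ 2) = rad X from rfl]; field_simp

section Gsmooth
variable {G : ℝ → ℝ → ℝ}

lemma contDiff_slice (hG : ContDiff ℝ 2 (fun q : ℝ × ℝ => G q.1 q.2)) (t : ℝ) :
    ContDiff ℝ 2 (fun r => G t r) :=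
  hG.comp ((contDiff_const : ContDiff ℝ 2 (fun _ : ℝ => t)).prodMk contDiff_id)

lemma hasDerivAt_G_r (hG : ContDiff ℝ 2 (fun q : ℝ × ℝ => G q.1 q.2)) (t r : ℝ) :
    HasDerivAt (fun r' => G t r') (dR G t r) r :=
  (((contDiff_slice hG t).differentiable (by norm_num)).differentiableAt).hasDerivAt

lemma hasDerivAt_dR_r (hG : ContDiff ℝ 2 (fun q : ℝ × ℝ => G q.1 q.2)) (t r : ℝ) :
    HasDerivAt (fun r' => dR G t r') (dR (dR G) t r) r := by
  have h1 : ContDiff ℝ ((1 : ℕ) + 1) (fun r' => G t r') := by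
    have := contDiff_slice hG t
    norm_num at this ⊢
    exact this
  rw [contDiff_succ_iff_deriv] at h1
  have : DifferentiableAt ℝ (deriv fun r' => G t r') r :=
    ((h1.2.2.differentiable (by norm_num)).differentiableAt)
  exact this.hasDerivAt

lemma defGrad_eq (hG : ContDiff ℝ 2 (fun q : ℝ × ℝ => G q.1 q.2)) (t : ℝ)
    (X : Fin 3 → ℝ) (hX : rad X > 0) :
    defGrad G t X =
      !![1, 0, 0; 0, 1, 0;
         dR G t (rad X) * (X 0 / rad X), dR G t (rad X) * (X 1 / rad X), 1] := by
  have hg0 : HasDerivAt (fun s => G t (rad (Function.update X 0 s)))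
      (dR G t (rad X) * (X 0 / rad X)) (X 0) := by
    have := (hasDerivAt_G_r hG t (rad X)).comp (X 0)
      (by simpa [Function.update_eq_self] using hasDerivAt_rad0 X hX)
    simpa [Function.update_eq_self, Function.comp_def] using this
  have hg1 : HasDerivAt (fun s => G t (rad (Function.update X 1 s)))
      (dR G t (rad X) * (X 1 / rad X)) (X 1) := by
    have := (hasDerivAt_G_r hG t (rad X)).comp (X 1)
      (by simpa [Function.update_eq_self] using hasDerivAt_rad1 X hX)
    simpa [Function.update_eq_self, Function.comp_def] using this
  ext i j
  fin_cases i <;> fin_cases j <;>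
    simp [defGrad, pd, defm, Function.update, rad_update2]
  · exact hg0.deriv
  · exact hg1.deriv

end Gsmooth

lemma symM_add_smul (C E : Matrix (Fin 3) (Fin 3) ℝ) (s : ℝ) :
    symM (C + s • E) = symM C + s • symM E := by
  simp only [symM, Matrix.transpose_add, Matrix.transpose_smul]
  ext i j
  simp [Matrix.add_apply, Matrix.smul_apply]
  ring

lemma inv1_add_smul (M N : Matrix (Fin 3) (Fin 3) ℝ) (s : ℝ) :
    inv1 (M + s • N) = inv1 M + s * inv1 N := by
  simp [inv1, Matrix.trace_add, Matrix.trace_smul, smul_eq_mul]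

lemma inv4_add_smul (A : Fin 3 → ℝ) (M N : Matrix (Fin 3) (Fin 3) ℝ) (s : ℝ) :
    inv4 A (M + s • N) = inv4 A M + s * inv4 A N := by
  simp [inv4, Matrix.add_mulVec, Matrix.smul_mulVec, dotProduct_add,
    dotProduct_smul, smul_eq_mul]

lemma inv8_add_smul (A₁ A₂ : Fin 3 → ℝ) (M N : Matrix (Fin 3) (Fin 3) ℝ) (s : ℝ) :
    inv8 A₁ A₂ (M + s • N) = inv8 A₁ A₂ M + s * inv8 A₁ A₂ N := by
  simp [inv8, Matrix.add_mulVec, Matrix.smul_mulVec, dotProduct_add,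
    dotProduct_smul, smul_eq_mul]
  ring

lemma inv2_add_smul (M N : Matrix (Fin 3) (Fin 3) ℝ) (s : ℝ) :
    inv2 (M + s • N) = inv2 M + s * (M.trace * N.trace - (M * N).trace)
      + s ^ 2 * inv2 N := by
  have : (M + s • N) * (M + s • N)
      = M * M + s • (M * N) + s • (N * M) + (s * s) • (N * N) := by
    rw [add_mul, mul_add, mul_add, Matrix.smul_mul, Matrix.mul_smul, Matrix.smul_mul,
      Matrix.mul_smul, smul_smul]
    abel
  rw [inv2, this]
  simp only [Matrix.trace_add, Matrix.trace_smul, smul_eq_mul, Matrix.trace_mul_comm N M,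
    inv2]
  ring

lemma hasDerivAt_linAff (k m : ℝ) : HasDerivAt (fun s : ℝ => k + s * m) m 0 := by
  simpa using ((hasDerivAt_id (0 : ℝ)).mul_const m).const_add k

lemma hasDerivAt_quadAff (k m n : ℝ) :
    HasDerivAt (fun s : ℝ => k + s * m + s ^ 2 * n) m 0 := by
  have h2 : HasDerivAt (fun s : ℝ => s ^ 2 * n) 0 0 := by
    simpa using (hasDerivAt_pow 2 (0 : ℝ)).mul_const n
  simpa [Pi.add_def] using (hasDerivAt_linAff k m).add h2

lemma hasDerivAt_storedWMR (a b q₁ q₂ K₃ K₄ β : ℝ) (X : Fin 3 → ℝ)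
    (C E : Matrix (Fin 3) (Fin 3) ℝ) :
    HasDerivAt (fun s : ℝ => storedWMR a b q₁ q₂ K₃ K₄ β X (C + s • E))
      (a * inv1 (symM E)
        + b * ((symM C).trace * (symM E).trace - (symM C * symM E).trace)
        + q₁ * (2 * (inv4 (fib1 β X) (symM C) - 1) * inv4 (fib1 β X) (symM E))
        + q₂ * (2 * (inv4 (fib2 β X) (symM C) - 1) * inv4 (fib2 β X) (symM E))
        + K₃ * (2 * inv8 (fib1 β X) (fib2 β X) (symM C)
            * inv8 (fib1 β X) (fib2 β X) (symM E))
        + K₄ * inv8 (fib1 β X) (fib2 β X) (symM E)) 0 := by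
  set A₁ := fib1 β X
  set A₂ := fib2 β X
  have hfun : (fun s : ℝ => storedWMR a b q₁ q₂ K₃ K₄ β X (C + s • E))
      = fun s : ℝ =>
        a * ((inv1 (symM C) + s * inv1 (symM E)) - 3)
        + b * ((inv2 (symM C)
            + s * ((symM C).trace * (symM E).trace - (symM C * symM E).trace)
            + s ^ 2 * inv2 (symM E)) - 3)
        + q₁ * ((inv4 A₁ (symM C) + s * inv4 A₁ (symM E)) - 1) ^ 2
        + q₂ * ((inv4 A₂ (symM C) + s * inv4 A₂ (symM E)) - 1) ^ 2
        + K₃ * (inv8 A₁ A₂ (symM C) + s * inv8 A₁ A₂ (symM E)) ^ 2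
        + K₄ * (inv8 A₁ A₂ (symM C) + s * inv8 A₁ A₂ (symM E)) := by
    funext s
    rw [storedWMR, symM_add_smul, inv1_add_smul, inv2_add_smul, inv4_add_smul,
      inv4_add_smul, inv8_add_smul]
  rw [hfun]
  have h1 := ((hasDerivAt_linAff (inv1 (symM C)) (inv1 (symM E))).sub_const 3).const_mul a
  have h2 := ((hasDerivAt_quadAff (inv2 (symM C))
      ((symM C).trace * (symM E).trace - (symM C * symM E).trace)
      (inv2 (symM E))).sub_const 3).const_mul b
  have h4 := (((hasDerivAt_linAff (inv4 A₁ (symM C)) (inv4 A₁ (symM E))).sub_const 1).pow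
      2).const_mul q₁
  have h6 := (((hasDerivAt_linAff (inv4 A₂ (symM C)) (inv4 A₂ (symM E))).sub_const 1).pow
      2).const_mul q₂
  have h8a := ((hasDerivAt_linAff (inv8 A₁ A₂ (symM C)) (inv8 A₁ A₂ (symM E))).pow
      2).const_mul K₃
  have h8b := (hasDerivAt_linAff (inv8 A₁ A₂ (symM C)) (inv8 A₁ A₂ (symM E))).const_mul K₄
  have := ((((h1.add h2).add h4).add h6).add h8a).add h8b
  refine this.congr_deriv ?_
  norm_num

lemma transpose_fin3 {α : Type*} (a11 a12 a13 a21 a22 a23 a31 a32 a33 : α) :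
    (!![a11,a12,a13;a21,a22,a23;a31,a32,a33])ᵀ
      = !![a11,a21,a31;a12,a22,a32;a13,a23,a33] := by
  ext i j
  fin_cases i <;> fin_cases j <;> rfl

lemma symM_apply (M : Matrix (Fin 3) (Fin 3) ℝ) (i j : Fin 3) :
    symM M i j = (M i j + M j i) / 2 := by
  simp [symM, Matrix.add_apply, Matrix.smul_apply, Matrix.transpose_apply]
  ring

set_option maxHeartbeats 3200000 in
lemma PK1_row3 (a b q₁ q₂ K₃ K₄ β ρ₀ : ℝ) (p : ℝ → ℝ → ℝ) {G : ℝ → ℝ → ℝ}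
    (hG : ContDiff ℝ 2 (fun q : ℝ × ℝ => G q.1 q.2)) (t : ℝ) (X : Fin 3 → ℝ)
    (hX : rad X > 0) (j : Fin 3) :
    PK1 (storedWMR a b q₁ q₂ K₃ K₄ β) p ρ₀ G t X 2 j =
      ![2 * ρ₀ * (a + b) * dR G t (rad X) * (X 0 / rad X),
        2 * ρ₀ * (a + b) * dR G t (rad X) * (X 1 / rad X),
        -(p t (rad X)) + 2 * ρ₀ * a + 4 * ρ₀ * b
          - 2 * ρ₀ * ((2 * K₃ * (Real.cos β ^ 2 - Real.sin β ^ 2) ^ 2 + K₄)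
              * (Real.cos β ^ 2 - Real.sin β ^ 2)) * Real.sin β ^ 2] j := by
  have hR : rad X ≠ 0 := ne_of_gt hX
  have hcs : (X 0 / rad X) ^ 2 + (X 1 / rad X) ^ 2 = 1 := by
    have h2 := rad_sq X
    field_simp
    linarith
  have hkm : Real.sin β ^ 2 + Real.cos β ^ 2 = 1 := Real.sin_sq_add_cos_sq β
  have hF : defGrad G t X = !![1, 0, 0; 0, 1, 0;
      dR G t (rad X) * (X 0 / rad X), dR G t (rad X) * (X 1 / rad X), 1] :=
    defGrad_eq hG t X hX
  have hC : CG G t X = !![1 + dR G t (rad X)^2*(X 0 / rad X)^2,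
      dR G t (rad X)^2*((X 0 / rad X)*(X 1 / rad X)), dR G t (rad X)*(X 0 / rad X);
      dR G t (rad X)^2*((X 0 / rad X)*(X 1 / rad X)), 1 + dR G t (rad X)^2*(X 1 / rad X)^2,
      dR G t (rad X)*(X 1 / rad X);
      dR G t (rad X)*(X 0 / rad X), dR G t (rad X)*(X 1 / rad X), 1] := by
    have hFT : (defGrad G t X)ᵀ = !![1, 0, dR G t (rad X) * (X 0 / rad X);
        0, 1, dR G t (rad X) * (X 1 / rad X); 0, 0, 1] := by
      rw [hF, transpose_fin3]
    rw [CG, hFT, hF]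
    ext i j
    fin_cases i <;> fin_cases j <;>
      simp [Matrix.mul_apply, Fin.sum_univ_three] <;> ring
  have hCsym : symM (CG G t X) = CG G t X := by
    rw [hC, symM, transpose_fin3]
    ext i j
    fin_cases i <;> fin_cases j <;>
      simp [Matrix.smul_apply, Matrix.add_apply, smul_eq_mul] <;> ring
  have hCinv : (CG G t X)⁻¹ = !![1, 0, -(dR G t (rad X)*(X 0 / rad X));
      0, 1, -(dR G t (rad X)*(X 1 / rad X));
      -(dR G t (rad X)*(X 0 / rad X)), -(dR G t (rad X)*(X 1 / rad X)),
      1 + dR G t (rad X)^2] := by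
    apply Matrix.inv_eq_right_inv
    rw [hC]
    ext i j
    fin_cases i <;> fin_cases j <;>
      simp [Matrix.mul_apply, Fin.sum_univ_three, Matrix.one_apply] <;>
      first
        | ring1
        | linear_combination (dR G t (rad X)^3*(X 0 / rad X)) * hcs
        | linear_combination (dR G t (rad X)^3*(X 1 / rad X)) * hcs
        | linear_combination (dR G t (rad X)^2) * hcs
        | linear_combination (-(dR G t (rad X)^3*(X 0 / rad X))) * hcs
        | linear_combination (-(dR G t (rad X)^3*(X 1 / rad X))) * hcs
        | linear_combination (-(dR G t (rad X)^2)) * hcs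
  have hI4 : inv4 (fib1 β X) (CG G t X) = 1 := by
    rw [hC]
    simp only [inv4, fib1, Matrix.mulVec, dotProduct, Fin.sum_univ_three]
    simp
    linear_combination (Real.cos β^2) * hcs + hkm
  have hI6 : inv4 (fib2 β X) (CG G t X) = 1 := by
    rw [hC]
    simp only [inv4, fib2, Matrix.mulVec, dotProduct, Fin.sum_univ_three]
    simp
    linear_combination (Real.cos β^2) * hcs + hkm
  have hI8 : inv8 (fib1 β X) (fib2 β X) (CG G t X)
      = (Real.cos β ^ 2 - Real.sin β ^ 2) ^ 2 := by
    rw [hC]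
    simp only [inv8, fib1, fib2, Matrix.mulVec, dotProduct, Fin.sum_univ_three]
    simp
    linear_combination (Real.cos β^2*(Real.cos β^2*((X 0 / rad X)^2+(X 1 / rad X)^2)
      + Real.cos β^2 - 2*Real.sin β^2)) * hcs
  have htr : (CG G t X).trace = 3 + dR G t (rad X) ^ 2 := by
    rw [hC]
    simp [Matrix.trace_fin_three]
    linear_combination (dR G t (rad X)^2) * hcs
  have hmat : matPD (storedWMR a b q₁ q₂ K₃ K₄ β X) (CG G t X) = Matrix.of fun i j =>
      a * (1 : Matrix (Fin 3) (Fin 3) ℝ) i j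
      + b * ((3 + dR G t (rad X)^2) * (1 : Matrix (Fin 3) (Fin 3) ℝ) i j - CG G t X i j)
      + (2*K₃*(Real.cos β^2 - Real.sin β^2)^2 + K₄) * ((fib1 β X ⬝ᵥ fib2 β X)
          * (fib1 β X i * fib2 β X j + fib1 β X j * fib2 β X i) / 2) := by
    ext i j
    rw [matPD]
    simp only [Matrix.of_apply]
    rw [(hasDerivAt_storedWMR a b q₁ q₂ K₃ K₄ β X (CG G t X)
      (Matrix.single i j 1)).deriv]
    rw [hCsym, hI4, hI6, hI8, htr, hC]
    fin_cases i <;> fin_cases j <;>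
      simp [inv1, inv4, inv8, symM_apply, Matrix.single, Matrix.trace_fin_three,
        Matrix.mul_apply, Matrix.vecMul, Matrix.mulVec, dotProduct,
        Fin.sum_univ_three, fib1, fib2, Matrix.one_apply, Matrix.vecHead,
        Matrix.vecTail] <;> ring1
  rw [PK1, hF, hCinv, hmat]
  fin_cases j
  · show _ = 2 * ρ₀ * (a + b) * dR G t (rad X) * (X 0 / rad X)
    simp [Matrix.mul_apply, Matrix.add_apply, Matrix.smul_apply, Fin.sum_univ_three,
      Matrix.one_apply, fib1, fib2, dotProduct, smul_eq_mul, hC,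
      Matrix.vecHead, Matrix.vecTail, Pi.smul_apply, Matrix.of_apply]
    linear_combination (-(2*ρ₀*b*dR G t (rad X)^3*(X 0 / rad X))) * hcs
  · show _ = 2 * ρ₀ * (a + b) * dR G t (rad X) * (X 1 / rad X)
    simp [Matrix.mul_apply, Matrix.add_apply, Matrix.smul_apply, Fin.sum_univ_three,
      Matrix.one_apply, fib1, fib2, dotProduct, smul_eq_mul, hC,
      Matrix.vecHead, Matrix.vecTail, Pi.smul_apply, Matrix.of_apply]
    linear_combination (-(2*ρ₀*b*dR G t (rad X)^3*(X 1 / rad X))) * hcs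
  · show _ = -(p t (rad X)) + 2 * ρ₀ * a + 4 * ρ₀ * b
        - 2 * ρ₀ * ((2 * K₃ * (Real.cos β ^ 2 - Real.sin β ^ 2) ^ 2 + K₄)
            * (Real.cos β ^ 2 - Real.sin β ^ 2)) * Real.sin β ^ 2
    simp [Matrix.mul_apply, Matrix.add_apply, Matrix.smul_apply, Fin.sum_univ_three,
      Matrix.one_apply, fib1, fib2, dotProduct, smul_eq_mul, hC,
      Matrix.vecHead, Matrix.vecTail, Pi.smul_apply, Matrix.of_apply]
    linear_combination (p t (rad X) * dR G t (rad X)^2 - 2*ρ₀*b*dR G t (rad X)^2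
      - 2*ρ₀*(2*K₃*(Real.cos β^2 - Real.sin β^2)^2 + K₄)*Real.sin β^2*Real.cos β^2) * hcs

section Main
variable {G : ℝ → ℝ → ℝ}

lemma pd0_eq (a b q₁ q₂ K₃ K₄ β ρ₀ : ℝ) (p : ℝ → ℝ → ℝ)
    (hG : ContDiff ℝ 2 (fun q : ℝ × ℝ => G q.1 q.2)) (t : ℝ) (X : Fin 3 → ℝ)
    (hX : rad X > 0) :
    pd (fun Y => PK1 (storedWMR a b q₁ q₂ K₃ K₄ β) p ρ₀ G t Y 2 0) 0 X
      = 2 * ρ₀ * (a + b) * (dR (dR G) t (rad X) * (X 0 / rad X) * (X 0 / rad X)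
          + dR G t (rad X) * ((1 * rad X - X 0 * (X 0 / rad X)) / rad X ^ 2)) := by
  have hR : rad X ≠ 0 := ne_of_gt hX
  have hrad : HasDerivAt (fun z => rad (Function.update X 0 z)) (X 0 / rad X) (X 0) :=
    hasDerivAt_rad0 X hX
  have h0 : Filter.Tendsto (fun z => rad (Function.update X 0 z)) (nhds (X 0))
      (nhds (rad X)) := by
    have := hrad.continuousAt
    unfold ContinuousAt at this
    simpa using this
  have hev : ∀ᶠ z in nhds (X 0), 0 < rad (Function.update X 0 z) :=
    h0.eventually_const_lt hX
  have heq : (fun z => PK1 (storedWMR a b q₁ q₂ K₃ K₄ β) p ρ₀ G t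
        (Function.update X 0 z) 2 0)
      =ᶠ[nhds (X 0)] (fun z => 2 * ρ₀ * (a + b)
        * (dR G t (rad (Function.update X 0 z)) * (z / rad (Function.update X 0 z)))) := by
    filter_upwards [hev] with z hz
    rw [PK1_row3 a b q₁ q₂ K₃ K₄ β ρ₀ p hG t (Function.update X 0 z) hz 0]
    simp [Function.update_self]
    ring
  rw [pd, heq.deriv_eq]
  have h1 : HasDerivAt (fun z => dR G t (rad (Function.update X 0 z)))
      (dR (dR G) t (rad X) * (X 0 / rad X)) (X 0) := by
    have := (hasDerivAt_dR_r hG t (rad X)).comp (X 0)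
      (by simpa [Function.update_eq_self] using hrad)
    simpa [Function.update_eq_self, Function.comp_def] using this
  have h2 : HasDerivAt (fun z => z / rad (Function.update X 0 z))
      ((1 * rad X - X 0 * (X 0 / rad X)) / rad X ^ 2) (X 0) := by
    have := (hasDerivAt_id (X 0)).div hrad (by rwa [Function.update_eq_self])
    exact this.congr_deriv (by simp [Function.update_eq_self])
  have := ((h1.mul h2).const_mul (2 * ρ₀ * (a + b))).deriv
  refine this.trans ?_
  simp [Function.update_eq_self]
  try ring

lemma pd1_eq (a b q₁ q₂ K₃ K₄ β ρ₀ : ℝ) (p : ℝ → ℝ → ℝ)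
    (hG : ContDiff ℝ 2 (fun q : ℝ × ℝ => G q.1 q.2)) (t : ℝ) (X : Fin 3 → ℝ)
    (hX : rad X > 0) :
    pd (fun Y => PK1 (storedWMR a b q₁ q₂ K₃ K₄ β) p ρ₀ G t Y 2 1) 1 X
      = 2 * ρ₀ * (a + b) * (dR (dR G) t (rad X) * (X 1 / rad X) * (X 1 / rad X)
          + dR G t (rad X) * ((1 * rad X - X 1 * (X 1 / rad X)) / rad X ^ 2)) := by
  have hR : rad X ≠ 0 := ne_of_gt hX
  have hrad : HasDerivAt (fun z => rad (Function.update X 1 z)) (X 1 / rad X) (X 1) :=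
    hasDerivAt_rad1 X hX
  have h0 : Filter.Tendsto (fun z => rad (Function.update X 1 z)) (nhds (X 1))
      (nhds (rad X)) := by
    have := hrad.continuousAt
    unfold ContinuousAt at this
    simpa using this
  have hev : ∀ᶠ z in nhds (X 1), 0 < rad (Function.update X 1 z) :=
    h0.eventually_const_lt hX
  have heq : (fun z => PK1 (storedWMR a b q₁ q₂ K₃ K₄ β) p ρ₀ G t
        (Function.update X 1 z) 2 1)
      =ᶠ[nhds (X 1)] (fun z => 2 * ρ₀ * (a + b)
        * (dR G t (rad (Function.update X 1 z)) * (z / rad (Function.update X 1 z)))) := by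
    filter_upwards [hev] with z hz
    rw [PK1_row3 a b q₁ q₂ K₃ K₄ β ρ₀ p hG t (Function.update X 1 z) hz 1]
    simp [Function.update_self]
    ring
  rw [pd, heq.deriv_eq]
  have h1 : HasDerivAt (fun z => dR G t (rad (Function.update X 1 z)))
      (dR (dR G) t (rad X) * (X 1 / rad X)) (X 1) := by
    have := (hasDerivAt_dR_r hG t (rad X)).comp (X 1)
      (by simpa [Function.update_eq_self] using hrad)
    simpa [Function.update_eq_self, Function.comp_def] using this
  have h2 : HasDerivAt (fun z => z / rad (Function.update X 1 z))
      ((1 * rad X - X 1 * (X 1 / rad X)) / rad X ^ 2) (X 1) := by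
    have := (hasDerivAt_id (X 1)).div hrad (by rwa [Function.update_eq_self])
    exact this.congr_deriv (by simp [Function.update_eq_self])
  have := ((h1.mul h2).const_mul (2 * ρ₀ * (a + b))).deriv
  refine this.trans ?_
  simp [Function.update_eq_self]
  try ring

lemma pd2_eq (a b q₁ q₂ K₃ K₄ β ρ₀ : ℝ) (p : ℝ → ℝ → ℝ)
    (hG : ContDiff ℝ 2 (fun q : ℝ × ℝ => G q.1 q.2)) (t : ℝ) (X : Fin 3 → ℝ)
    (hX : rad X > 0) :
    pd (fun Y => PK1 (storedWMR a b q₁ q₂ K₃ K₄ β) p ρ₀ G t Y 2 2) 2 X = 0 := by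
  have hfun : (fun z => PK1 (storedWMR a b q₁ q₂ K₃ K₄ β) p ρ₀ G t
        (Function.update X 2 z) 2 2)
      = fun _ => -(p t (rad X)) + 2 * ρ₀ * a + 4 * ρ₀ * b
          - 2 * ρ₀ * ((2 * K₃ * (Real.cos β ^ 2 - Real.sin β ^ 2) ^ 2 + K₄)
              * (Real.cos β ^ 2 - Real.sin β ^ 2)) * Real.sin β ^ 2 := by
    funext z
    rw [PK1_row3 a b q₁ q₂ K₃ K₄ β ρ₀ p hG t (Function.update X 2 z)
      (by rw [rad_update2]; exact hX) 2]
    simp [rad_update2]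
  rw [pd, hfun, deriv_const]

lemma key_iff (a b q₁ q₂ K₃ K₄ β ρ₀ : ℝ) (hρ : ρ₀ > 0) (p : ℝ → ℝ → ℝ)
    (hG : ContDiff ℝ 2 (fun q : ℝ × ℝ => G q.1 q.2)) (t : ℝ) (X : Fin 3 → ℝ)
    (hX : rad X > 0) :
    (ρ₀ * deriv (fun τ => deriv (fun σ => defm G σ X 2) τ) t =
        ∑ j : Fin 3, pd (fun Y => PK1 (storedWMR a b q₁ q₂ K₃ K₄ β) p ρ₀ G t Y 2 j) j X)
      ↔ dt (dt G) t (rad X) = 2 * (a + b)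
          * (dR (dR G) t (rad X) + dR G t (rad X) / rad X) := by
  have hR : rad X ≠ 0 := ne_of_gt hX
  have hr2 : X 0 ^ 2 + X 1 ^ 2 = rad X ^ 2 := (rad_sq X).symm
  have hL : deriv (fun τ => deriv (fun σ => defm G σ X 2) τ) t = dt (dt G) t (rad X) := by
    have h2 : (fun τ => deriv (fun σ => defm G σ X 2) τ)
        = fun τ => dt G τ (rad X) := by
      funext τ
      have h1 : (fun σ => defm G σ X 2) = fun σ => X 2 + G σ (rad X) := by
        funext σ; simp [defm]
      rw [h1, deriv_const_add]
      rfl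
    rw [h2]
    rfl
  have hS : ∑ j : Fin 3, pd (fun Y => PK1 (storedWMR a b q₁ q₂ K₃ K₄ β) p ρ₀ G t Y 2 j) j X
      = ρ₀ * (2 * (a + b) * (dR (dR G) t (rad X) + dR G t (rad X) / rad X)) := by
    rw [Fin.sum_univ_three, pd0_eq a b q₁ q₂ K₃ K₄ β ρ₀ p hG t X hX,
      pd1_eq a b q₁ q₂ K₃ K₄ β ρ₀ p hG t X hX, pd2_eq a b q₁ q₂ K₃ K₄ β ρ₀ p hG t X hX]
    field_simp
    linear_combination (2 * ρ₀ * (a + b) * (dR (dR G) t (rad X) * rad X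
      - dR G t (rad X))) * hr2
  rw [hL, hS, mul_right_inj' (ne_of_gt hρ)]

end Main

/-- **Theorem 3.2.** For the Mooney–Rivlin / quadratic-reinforcement stored
energy, the third (Z-) component of the momentum equations holds at all points with
`R > 0` iff `G` satisfies the linear cylindrical wave equation
`G_tt = α (G_RR + G_R/R)` with `α = 2(a+b)`; in particular the equation involves neither
`q₁, q₂, K₃, K₄` nor the pitch angle `β`. -/
theorem zMomentum_iff_linear_wave_MooneyRivlin
    (a b q₁ q₂ K₃ K₄ : ℝ) (β : ℝ) (hβ : β ∈ Set.Ioo 0 (π / 2)) (ρ₀ : ℝ) (hρ : ρ₀ > 0)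
    (G : ℝ → ℝ → ℝ) (hG : ContDiff ℝ 2 (fun q : ℝ × ℝ => G q.1 q.2))
    (p : ℝ → ℝ → ℝ) (hp : ContDiff ℝ (⊤ : ℕ∞) (fun q : ℝ × ℝ => p q.1 q.2)) :
    (∀ t : ℝ, ∀ X : Fin 3 → ℝ, rad X > 0 →
        ρ₀ * deriv (fun τ => deriv (fun σ => defm G σ X 2) τ) t =
          ∑ j : Fin 3, pd (fun Y => PK1 (storedWMR a b q₁ q₂ K₃ K₄ β) p ρ₀ G t Y 2 j) j X)
    ↔
    (∀ t R : ℝ, R > 0 →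
        dt (dt G) t R = 2 * (a + b) * (dR (dR G) t R + dR G t R / R)) := by
  constructor
  · intro h t R hR
    have hradX : rad ![R, 0, 0] = R := by
      rw [rad]
      norm_num
      exact Real.sqrt_sq hR.le
    have hpos : rad ![R, 0, 0] > 0 := by rw [hradX]; exact hR
    have h1 := (key_iff a b q₁ q₂ K₃ K₄ β ρ₀ hρ p hG t ![R, 0, 0] hpos).1
      (h t ![R, 0, 0] hpos)
    rwa [hradX] at h1
  · intro h t X hX
    exact (key_iff a b q₁ q₂ K₃ K₄ β ρ₀ hρ p hG t X hX).2 (h t (rad X) hX)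
end
end
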